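/- arXiv:2301.11866 — 2 statements merged into one kernel-verified Lean document; each statement's English description precedes it below -/
import Mathlib

section
/- Let X be a nonempty Stone space. If the Riesz space LocallyConstant(X,ℝ) is Dedekind complete (every nonempty subset that is bounded above has a supremum), then the Boolean algebra Clopens(X) of clopen subsets of X is complete (every subset of Clopens(X) has a supremum in Clopens(X)). -/
/-!
Send a family `S` of clopens to the indicator functions of its members; these are bounded above
by the indicator of the whole space. If `f` is their supremum, the superlevel set
`{x | 1 ≤ f x}` is clopen because `f` is locally constant. It contains every `U ∈ S`, and it lies
inside every clopen upper bound `W` of `S` because `f` lies below the indicator of `W`.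
-/

open TopologicalSpace

noncomputable instance {X : Type*} [TopologicalSpace X] : Max (LocallyConstant X ℝ) :=
  ⟨fun f g => ⟨fun x => max (f x) (g x), f.isLocallyConstant.comp₂ g.isLocallyConstant max⟩⟩

noncomputable instance {X : Type*} [TopologicalSpace X] : Min (LocallyConstant X ℝ) :=
  ⟨fun f g => ⟨fun x => min (f x) (g x), f.isLocallyConstant.comp₂ g.isLocallyConstant min⟩⟩

/-- The pointwise lattice structure on locally constant real functions. -/
noncomputable instance {X : Type*} [TopologicalSpace X] : Lattice (LocallyConstant X ℝ) :=
  letI : LE (LocallyConstant X ℝ) := ⟨fun f g => ⇑f ≤ ⇑g⟩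
  letI : LT (LocallyConstant X ℝ) := ⟨fun f g => ⇑f < ⇑g⟩
  Function.Injective.lattice _ DFunLike.coe_injective Iff.rfl Iff.rfl (fun _ _ => rfl) (fun _ _ => rfl)

namespace LocallyConstant

variable {X : Type*} [TopologicalSpace X]

noncomputable def clopenIndicator (U : Clopens X) : LocallyConstant X ℝ :=
  charFn ℝ U.isClopen

theorem clopenIndicator_apply (U : Clopens X) (x : X) :
    clopenIndicator U x = (U : Set X).indicator 1 x := by
  rw [clopenIndicator, coe_charFn]

theorem clopenIndicator_monotone : Monotone (clopenIndicator (X := X)) := fun U V hUV x => by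
  simp only [clopenIndicator_apply]
  exact Set.indicator_le_indicator_of_subset hUV (fun _ => zero_le_one) x

def superlevelClopen (f : LocallyConstant X ℝ) : Clopens X :=
  ⟨f ⁻¹' Set.Ici 1, ⟨f.isLocallyConstant (Set.Ici 1)ᶜ⟩, f.isLocallyConstant _⟩

theorem le_superlevelClopen_of_clopenIndicator_le {U : Clopens X} {f : LocallyConstant X ℝ}
    (h : clopenIndicator U ≤ f) : U ≤ superlevelClopen f := fun x hx => by
  have := h x
  rwa [clopenIndicator_apply, Set.indicator_of_mem hx] at this

theorem superlevelClopen_le_of_le_clopenIndicator {f : LocallyConstant X ℝ} {W : Clopens X}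
    (h : f ≤ clopenIndicator W) : superlevelClopen f ≤ W := fun x (hx : 1 ≤ f x) => by
  by_contra hxW
  have := hx.trans (h x)
  rw [clopenIndicator_apply, Set.indicator_of_notMem hxW] at this
  exact zero_lt_one.not_ge this

theorem isLUB_superlevelClopen {S : Set (Clopens X)} {f : LocallyConstant X ℝ}
    (hf : IsLUB (clopenIndicator '' S) f) : IsLUB S (superlevelClopen f) :=
  ⟨fun _ hU => le_superlevelClopen_of_clopenIndicator_le (hf.1 ⟨_, hU, rfl⟩),
    fun _ hW => superlevelClopen_le_of_le_clopenIndicator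
      (hf.2 (clopenIndicator_monotone.mem_upperBounds_image hW))⟩

end LocallyConstant

theorem stmt4_general {X : Type*}
    [TopologicalSpace X]
    (hDC : ∀ D : Set (LocallyConstant X ℝ), D.Nonempty → BddAbove D →
      ∃ s : LocallyConstant X ℝ, IsLUB D s) :
    ∀ S : Set (Clopens X), ∃ s : Clopens X, IsLUB S s := by
  intro S
  rcases S.eq_empty_or_nonempty with rfl | hS
  · exact ⟨⊥, isLUB_empty⟩
  obtain ⟨f, hf⟩ := hDC (LocallyConstant.clopenIndicator '' S) (hS.image _)
    (LocallyConstant.clopenIndicator_monotone.map_bddAbove (OrderTop.bddAbove S))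
  exact ⟨f.superlevelClopen, LocallyConstant.isLUB_superlevelClopen hf⟩

theorem stmt4 {X : Type*}
    [TopologicalSpace X] [CompactSpace X] [T2Space X] [TotallyDisconnectedSpace X] [Nonempty X]
    (hDC : ∀ D : Set (LocallyConstant X ℝ), D.Nonempty → BddAbove D →
      ∃ s : LocallyConstant X ℝ, IsLUB D s) :
    ∀ S : Set (Clopens X), ∃ s : Clopens X, IsLUB S s :=
  stmt4_general hDC
end

section
/- Let X be a nonempty Stone space. The components of the constant function 1 in the Riesz space LocallyConstant(X,ℝ) are exactly the indicator functions of clopen subsets of X, the map sending a clopen set U to its indicator function 1_U is a Boolean isomorphism from Clopens(X) onto the Boolean algebra of components of 1, and LocallyConstant(X,ℝ) equals the linear span of these indicator functions. -/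
open TopologicalSpace

/-- The indicator (characteristic) function of a clopen set, as a locally constant
real-valued function. -/
noncomputable def indLC {X : Type*} [TopologicalSpace X] (U : Clopens X) :
    LocallyConstant X ℝ :=
  LocallyConstant.charFn ℝ U.isClopen

/-!
A component `u` of `1` satisfies `min (u x) (1 - u x) = 0` pointwise, so it takes only the
values `0` and `1`; its fibre over `1` is clopen because `u` is locally constant, and `u` is the
indicator of that fibre. The Boolean operations are then checked pointwise on `{0, 1}`-valued
functions. On a compact space a locally constant function has finite range, so it is the finite
sum `∑ y • 1_{f⁻¹ y}` over its values.
-/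

lemma Real.nonneg_and_min_one_sub_eq_zero_iff {r : ℝ} :
    0 ≤ r ∧ min r (1 - r) = 0 ↔ r = 0 ∨ r = 1 := by
  constructor
  · rintro ⟨hr, hmin⟩
    rcases min_eq_iff.mp hmin with ⟨h, -⟩ | ⟨h, -⟩
    · exact Or.inl h
    · exact Or.inr (by linarith)
  · rintro (rfl | rfl) <;> norm_num

namespace LocallyConstant

variable {X : Type*} [TopologicalSpace X]

lemma le_iff_forall_apply_le {u v : LocallyConstant X ℝ} : u ≤ v ↔ ∀ x, u x ≤ v x := Iff.rfl

@[simp] lemma inf_apply (u v : LocallyConstant X ℝ) (x : X) : (u ⊓ v) x = min (u x) (v x) := rfl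

@[simp] lemma sup_apply (u v : LocallyConstant X ℝ) (x : X) : (u ⊔ v) x = max (u x) (v x) := rfl

lemma sum_smul_charFn_fiber_eq {Y : Type*} [Semiring Y] [CompactSpace X]
    (f : LocallyConstant X Y) :
    ∑ y ∈ f.range_finite.toFinset, y • charFn Y (f.isLocallyConstant.isClopen_fiber y) = f := by
  ext x
  rw [← evalₗ_apply Y x, map_sum, Finset.sum_eq_single (f x)]
  · simp [coe_charFn]
  · intro y _ hy
    simp [coe_charFn, hy.symm]
  · exact fun h => (h (f.range_finite.mem_toFinset.mpr (Set.mem_range_self x))).elim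

end LocallyConstant

section indLC

open LocallyConstant

variable {X : Type*} [TopologicalSpace X]

open Classical in
lemma indLC_apply (U : Clopens X) (x : X) : indLC U x = if x ∈ U then 1 else 0 := by
  simp [indLC, coe_charFn, Set.indicator_apply]

lemma indLC_injective : Function.Injective (indLC (X := X)) := fun U V h =>
  SetLike.coe_injective (charFn_inj ℝ U.isClopen V.isClopen h)

lemma nonneg_and_inf_one_sub_eq_zero_iff (u : LocallyConstant X ℝ) :
    0 ≤ u ∧ u ⊓ (1 - u) = 0 ↔ ∀ x, u x = 0 ∨ u x = 1 := by
  simp only [← Real.nonneg_and_min_one_sub_eq_zero_iff, le_iff_forall_apply_le,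
    LocallyConstant.ext_iff, inf_apply, LocallyConstant.sub_apply, LocallyConstant.one_apply,
    LocallyConstant.zero_apply, forall_and]

lemma forall_eq_zero_or_eq_one_iff_exists_indLC (u : LocallyConstant X ℝ) :
    (∀ x, u x = 0 ∨ u x = 1) ↔ ∃ U : Clopens X, u = indLC U := by
  constructor
  · intro hu
    let U : Clopens X := ⟨u ⁻¹' {1}, u.isLocallyConstant.isClopen_fiber 1⟩
    refine ⟨U, ?_⟩
    ext x
    have hmem : x ∈ U ↔ u x = 1 := Iff.rfl
    rcases hu x with h | h <;> simp [indLC_apply, hmem, h]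
  · rintro ⟨U, rfl⟩ x
    by_cases hx : x ∈ U <;> simp [indLC_apply, hx]

lemma nonneg_and_inf_one_sub_eq_zero_iff_exists_indLC (u : LocallyConstant X ℝ) :
    0 ≤ u ∧ u ⊓ (1 - u) = 0 ↔ ∃ U : Clopens X, u = indLC U :=
  (nonneg_and_inf_one_sub_eq_zero_iff u).trans (forall_eq_zero_or_eq_one_iff_exists_indLC u)

lemma indLC_inf (U V : Clopens X) : indLC (U ⊓ V) = indLC U ⊓ indLC V := by
  ext x
  have hmem : x ∈ U ⊓ V ↔ x ∈ U ∧ x ∈ V := Iff.rfl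
  by_cases hU : x ∈ U <;> by_cases hV : x ∈ V <;> simp [indLC_apply, hmem, hU, hV]

lemma indLC_symmDiff (U V : Clopens X) :
    indLC (symmDiff U V) = (indLC U ⊓ (1 - indLC V)) ⊔ ((1 - indLC U) ⊓ indLC V) := by
  ext x
  have hmem : x ∈ symmDiff U V ↔ x ∈ U ∧ x ∉ V ∨ x ∈ V ∧ x ∉ U := Iff.rfl
  by_cases hU : x ∈ U <;> by_cases hV : x ∈ V <;>
    simp [indLC_apply, LocallyConstant.sub_apply, hmem, hU, hV]

lemma indLC_top : indLC (⊤ : Clopens X) = 1 := by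
  ext x
  simp [indLC_apply, show x ∈ (⊤ : Clopens X) from trivial]

lemma span_range_indLC [CompactSpace X] : Submodule.span ℝ (Set.range (indLC (X := X))) = ⊤ := by
  refine Submodule.eq_top_iff'.mpr fun f => ?_
  rw [← sum_smul_charFn_fiber_eq f]
  exact Submodule.sum_mem _ fun y _ =>
    Submodule.smul_mem _ _ (Submodule.subset_span ⟨⟨_, f.isLocallyConstant.isClopen_fiber y⟩, rfl⟩)

end indLC

theorem stmt11_general {X : Type*}
    [TopologicalSpace X] [CompactSpace X] :
    -- the components of the constant function 1 are exactly the indicator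
    -- functions of clopen subsets of X
    (∀ u : LocallyConstant X ℝ,
      (0 ≤ u ∧ u ⊓ (1 - u) = 0) ↔ ∃ U : Clopens X, u = indLC U) ∧
    -- U ↦ 1_U is a Boolean isomorphism onto the components of 1:
    -- it is injective, ...
    Function.Injective (indLC (X := X)) ∧
    -- ... its range is exactly the set of components of 1, ...
    Set.range (indLC (X := X)) = {u : LocallyConstant X ℝ | 0 ≤ u ∧ u ⊓ (1 - u) = 0} ∧
    -- ... it preserves meets, the symmetric difference, and the top element, ...
    (∀ U V : Clopens X, indLC (U ⊓ V) = indLC U ⊓ indLC V) ∧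
    (∀ U V : Clopens X, indLC (symmDiff U V) =
      (indLC U ⊓ (1 - indLC V)) ⊔ ((1 - indLC U) ⊓ indLC V)) ∧
    indLC (⊤ : Clopens X) = 1 ∧
    -- ... and LocallyConstant X ℝ is the linear span of the indicator functions
    Submodule.span ℝ (Set.range (indLC (X := X))) = ⊤ := by
  refine ⟨nonneg_and_inf_one_sub_eq_zero_iff_exists_indLC, indLC_injective, ?_, indLC_inf, indLC_symmDiff,
    indLC_top, span_range_indLC⟩
  ext u
  rw [Set.mem_range, Set.mem_ofPred_eq, nonneg_and_inf_one_sub_eq_zero_iff_exists_indLC]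
  simp only [eq_comm]

theorem stmt11 {X : Type*}
    [TopologicalSpace X] [CompactSpace X] [T2Space X] [TotallyDisconnectedSpace X] [Nonempty X] :
    -- the components of the constant function 1 are exactly the indicator
    -- functions of clopen subsets of X
    (∀ u : LocallyConstant X ℝ,
      (0 ≤ u ∧ u ⊓ (1 - u) = 0) ↔ ∃ U : Clopens X, u = indLC U) ∧
    -- U ↦ 1_U is a Boolean isomorphism onto the components of 1:
    -- it is injective, ...
    Function.Injective (indLC (X := X)) ∧
    -- ... its range is exactly the set of components of 1, ...
    Set.range (indLC (X := X)) = {u : LocallyConstant X ℝ | 0 ≤ u ∧ u ⊓ (1 - u) = 0} ∧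
    -- ... it preserves meets, the symmetric difference, and the top element, ...
    (∀ U V : Clopens X, indLC (U ⊓ V) = indLC U ⊓ indLC V) ∧
    (∀ U V : Clopens X, indLC (symmDiff U V) =
      (indLC U ⊓ (1 - indLC V)) ⊔ ((1 - indLC U) ⊓ indLC V)) ∧
    indLC (⊤ : Clopens X) = 1 ∧
    -- ... and LocallyConstant X ℝ is the linear span of the indicator functions
    Submodule.span ℝ (Set.range (indLC (X := X))) = ⊤ :=
  stmt11_general
end
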